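/- arXiv:1908.03980 — 2 statements merged into one kernel-verified Lean document; each statement's English description precedes it below -/
import Mathlib

section
/- Let K ⊆ ℝⁿ be closed and x ∈ ∂K. Then the Dubovitsky–Miliutin cone of K at x equals the contingent cone of K at x minus the contingent cone of the complement ℝⁿ \ K at x; that is, D_K(x) = T_K(x) \ T_{ℝⁿ\K}(x). -/
open Filter Set

/-- The contingent cone of `K` at `x`, defined via the liminf of scaled distances. -/
def contingentCone {n : ℕ} (K : Set (EuclideanSpace ℝ (Fin n)))
    (x : EuclideanSpace ℝ (Fin n)) : Set (EuclideanSpace ℝ (Fin n)) :=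
  {v | Filter.liminf (fun h : ℝ => Metric.infDist (x + h • v) K / h)
      (nhdsWithin 0 (Set.Ioi 0)) = 0}

/-- The Dubovitsky–Miliutin cone of `K` at `x`. -/
def dmCone {n : ℕ} (K : Set (EuclideanSpace ℝ (Fin n)))
    (x : EuclideanSpace ℝ (Fin n)) : Set (EuclideanSpace ℝ (Fin n)) :=
  {v | ∃ ε > (0 : ℝ), ∀ δ ∈ Set.Ioc (0 : ℝ) ε,
      ∀ w ∈ Metric.closedBall (0 : EuclideanSpace ℝ (Fin n)) ε, x + δ • (v + w) ∈ K}

theorem stmt_1 {n : ℕ} (K : Set (EuclideanSpace ℝ (Fin n))) (hK : IsClosed K)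
    (x : EuclideanSpace ℝ (Fin n)) (hx : x ∈ frontier K) :
    dmCone K x = contingentCone K x \ contingentCone Kᶜ x := by
  have hxK : x ∈ K := hK.frontier_subset hx
  have hxc : x ∈ closure Kᶜ := by
    rw [frontier_eq_closure_inter_closure] at hx; exact hx.2
  have hne : Kᶜ.Nonempty := closure_nonempty_iff.mp ⟨x, hxc⟩
  have hdist0 : Metric.infDist x Kᶜ = 0 := Metric.infDist_zero_of_mem_closure hxc
  -- upper bound for the complement quotient
  have hub : ∀ v : EuclideanSpace ℝ (Fin n), ∀ᶠ h in nhdsWithin (0:ℝ) (Set.Ioi 0),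
      Metric.infDist (x + h • v) Kᶜ / h ≤ ‖v‖ := by
    intro v
    filter_upwards [self_mem_nhdsWithin] with h hh
    have hh0 : (0:ℝ) < h := hh
    have hle : Metric.infDist (x + h • v) Kᶜ ≤ h * ‖v‖ := by
      calc Metric.infDist (x + h • v) Kᶜ
          ≤ Metric.infDist x Kᶜ + dist (x + h • v) x :=
            Metric.infDist_le_infDist_add_dist
        _ = h * ‖v‖ := by
            rw [hdist0, zero_add, dist_eq_norm]
            simp [norm_smul, abs_of_pos hh0]
    rw [div_le_iff₀ hh0]
    linarith [hle]
  ext v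
  constructor
  · rintro ⟨ε, hε, hεK⟩
    have hmem : Set.Ioc (0:ℝ) ε ∈ nhdsWithin (0:ℝ) (Set.Ioi 0) :=
      Ioc_mem_nhdsGT_of_mem ⟨le_refl 0, hε⟩
    constructor
    · -- v ∈ contingent cone of K
      have hev : ∀ᶠ h in nhdsWithin (0:ℝ) (Set.Ioi 0),
          Metric.infDist (x + h • v) K / h = (fun _ : ℝ => (0:ℝ)) h := by
        filter_upwards [hmem] with h hh
        have hmemK : x + h • v ∈ K := by
          have := hεK h hh 0 (by simp [hε.le])
          simpa using this
        simp [Metric.infDist_zero_of_mem hmemK]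
      simp only [contingentCone, Set.mem_setOf_eq]
      rw [Filter.liminf_congr hev, Filter.liminf_const]
    · -- v ∉ contingent cone of Kᶜ
      intro hcon
      simp only [contingentCone, Set.mem_setOf_eq] at hcon
      have hev : ∀ᶠ h in nhdsWithin (0:ℝ) (Set.Ioi 0),
          ε ≤ Metric.infDist (x + h • v) Kᶜ / h := by
        filter_upwards [hmem] with h hh
        have hh0 : (0:ℝ) < h := hh.1
        have hlb : h * ε ≤ Metric.infDist (x + h • v) Kᶜ := by
          by_contra hlt
          push_neg at hlt
          rw [Metric.infDist_lt_iff hne] at hlt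
          obtain ⟨y, hy, hdy⟩ := hlt
          apply hy
          have hw : x + h • (v + h⁻¹ • (y - (x + h • v))) ∈ K := by
            apply hεK h hh
            rw [Metric.mem_closedBall, dist_zero_right, norm_smul,
              norm_inv, Real.norm_eq_abs, abs_of_pos hh0]
            rw [inv_mul_le_iff₀ hh0]
            rw [dist_eq_norm, norm_sub_rev] at hdy
            linarith [hdy]
          have : x + h • (v + h⁻¹ • (y - (x + h • v))) = y := by
            rw [smul_add, smul_smul, mul_inv_cancel₀ hh0.ne', one_smul]
            abel
          rwa [this] at hw
        rw [le_div_iff₀ hh0]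
        linarith [hlb]
      have hcb : Filter.IsCoboundedUnder (· ≥ ·)
          (nhdsWithin (0:ℝ) (Set.Ioi 0))
          (fun h : ℝ => Metric.infDist (x + h • v) Kᶜ / h) :=
        Filter.IsBoundedUnder.isCoboundedUnder_ge ⟨‖v‖, hub v⟩
      have := Filter.le_liminf_of_le hcb hev
      rw [hcon] at this
      exact absurd this (not_le.mpr hε)
  · rintro ⟨_, hNT⟩
    simp only [contingentCone, Set.mem_setOf_eq] at hNT
    set g : ℝ → ℝ := fun h => Metric.infDist (x + h • v) Kᶜ / h with hg
    have hg0 : ∀ᶠ h in nhdsWithin (0:ℝ) (Set.Ioi 0), (0:ℝ) ≤ g h := by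
      filter_upwards [self_mem_nhdsWithin] with h hh
      exact div_nonneg Metric.infDist_nonneg (le_of_lt hh)
    have hcb : Filter.IsCoboundedUnder (· ≥ ·) (nhdsWithin (0:ℝ) (Set.Ioi 0)) g :=
      Filter.IsBoundedUnder.isCoboundedUnder_ge ⟨‖v‖, hub v⟩
    have hL0 : (0:ℝ) ≤ Filter.liminf g (nhdsWithin (0:ℝ) (Set.Ioi 0)) :=
      Filter.le_liminf_of_le hcb hg0
    have hLpos : (0:ℝ) < Filter.liminf g (nhdsWithin (0:ℝ) (Set.Ioi 0)) :=
      lt_of_le_of_ne hL0 (Ne.symm hNT)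
    set L := Filter.liminf g (nhdsWithin (0:ℝ) (Set.Ioi 0)) with hLdef
    have hbdd : Filter.IsBoundedUnder (· ≥ ·) (nhdsWithin (0:ℝ) (Set.Ioi 0)) g :=
      ⟨0, hg0⟩
    have hev : ∀ᶠ h in nhdsWithin (0:ℝ) (Set.Ioi 0), L / 2 < g h :=
      Filter.eventually_lt_of_lt_liminf (by linarith) hbdd
    rw [eventually_nhdsWithin_iff, Metric.eventually_nhds_iff] at hev
    obtain ⟨η, hη, hηP⟩ := hev
    refine ⟨min (L/2) (η/2), by positivity, ?_⟩
    intro δ hδ w hw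
    have hδ0 : (0:ℝ) < δ := hδ.1
    have hδη : dist δ (0:ℝ) < η := by
      rw [Real.dist_eq, sub_zero, abs_of_pos hδ0]
      have : δ ≤ η / 2 := le_trans hδ.2 (min_le_right _ _)
      linarith
    have hgδ : L / 2 < g δ := hηP hδη hδ0
    have hdistlb : δ * (L/2) < Metric.infDist (x + δ • v) Kᶜ := by
      have := (lt_div_iff₀ hδ0).mp (by rw [hg] at hgδ; exact hgδ)
      linarith [this]
    have hwb : ‖w‖ ≤ L/2 := by
      rw [Metric.mem_closedBall, dist_zero_right] at hw
      exact le_trans hw (min_le_left _ _)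
    have hmemball : x + δ • (v + w) ∈
        Metric.ball (x + δ • v) (Metric.infDist (x + δ • v) Kᶜ) := by
      rw [Metric.mem_ball, dist_eq_norm]
      have : x + δ • (v + w) - (x + δ • v) = δ • w := by
        rw [smul_add]; abel
      rw [this, norm_smul, Real.norm_eq_abs, abs_of_pos hδ0]
      calc δ * ‖w‖ ≤ δ * (L/2) := by
            exact mul_le_mul_of_nonneg_left hwb hδ0.le
        _ < _ := hdistlb
    exact Metric.ball_infDist_compl_subset hmemball
end

section
/- Let K ⊆ ℝⁿ be closed and x : [t₁, t₂] → ℝⁿ absolutely continuous. If the derivative x'(t) belongs to the external contingent cone E_K(x(t)) for almost all t ∈ (t₁, t₂), then the function t ↦ |x(t)|_K is nonincreasing on [t₁, t₂]. -/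
open Set Filter MeasureTheory

/-- Absolute continuity of a function on the interval `[a, b]`. -/
def AbsolutelyContinuousOnInterval' {X : Type*} [PseudoMetricSpace X]
    (f : ℝ → X) (a b : ℝ) : Prop :=
  ∀ ε > (0 : ℝ), ∃ δ > (0 : ℝ), ∀ (k : ℕ) (s t : Fin k → ℝ),
    (∀ i, s i ∈ Set.Icc a b ∧ t i ∈ Set.Icc a b ∧ s i ≤ t i) →
    (Pairwise fun i j => Disjoint (Set.Ioo (s i) (t i)) (Set.Ioo (s j) (t j))) →
    (∑ i, (t i - s i)) < δ → (∑ i, dist (f (s i)) (f (t i))) < ε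

/-- The external contingent cone of `K` at `z`. -/
def externalCone {n : ℕ} (K : Set (EuclideanSpace ℝ (Fin n)))
    (z : EuclideanSpace ℝ (Fin n)) : Set (EuclideanSpace ℝ (Fin n)) :=
  {v | Filter.liminf (fun h : ℝ => (Metric.infDist (z + h • v) K - Metric.infDist z K) / h)
      (nhdsWithin 0 (Set.Ioi 0)) ≤ 0}

/-!
The function `f t = infDist (x t) K` is absolutely continuous, being a 1-Lipschitz function of
`x`. Where `x` and `f` are both differentiable, replacing `x (t + h)` by `x t + h • x' t` changes
the distance to `K` by `o(h)`, so `f' t` is the limit of the quotients in the definition of the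
external cone and the cone condition forces `f' t ≤ 0`. The fundamental theorem of calculus for
absolutely continuous functions then gives `f b - f a = ∫ f' ≤ 0`.
-/

open Metric Topology

namespace AbsolutelyContinuousOnInterval'

variable {X : Type*} [PseudoMetricSpace X] {f : ℝ → X} {a b : ℝ}

theorem absolutelyContinuousOnInterval (hf : AbsolutelyContinuousOnInterval' f a b)
    (hab : a ≤ b) : AbsolutelyContinuousOnInterval f a b := by
  rw [absolutelyContinuousOnInterval_iff]
  intro ε hε
  obtain ⟨δ, hδ, H⟩ := hf ε hε
  refine ⟨δ, hδ, ?_⟩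
  rintro ⟨k, I⟩ ⟨hmem, hdisj⟩ hlen
  simp only [uIcc_of_le hab, Finset.mem_range] at hmem hlen ⊢
  have hdist (p q : ℝ) : dist (f (min p q)) (f (max p q)) = dist (f p) (f q) := by
    rcases le_total p q with h | h <;> simp [h, dist_comm]
  rw [Finset.sum_range fun i => dist (I i).1 (I i).2] at hlen
  rw [Finset.sum_range fun i => dist (f (I i).1) (f (I i).2)]
  simpa only [hdist] using
    H k (fun i => min (I i).1 (I i).2) (fun i => max (I i).1 (I i).2)
      (fun i => by
        obtain ⟨h₁, h₂⟩ := hmem i i.isLt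
        exact ⟨⟨le_min h₁.1 h₂.1, (min_le_left _ _).trans h₁.2⟩,
          ⟨h₁.1.trans (le_max_left _ _), max_le h₁.2 h₂.2⟩, min_le_max⟩)
      (fun i j hij => (hdisj (by simp) (by simp) (Fin.val_injective.ne hij)).mono
        Ioo_subset_Ioc_self Ioo_subset_Ioc_self)
      (by simpa only [max_sub_min_eq_abs', ← Real.dist_eq] using hlen)

end AbsolutelyContinuousOnInterval'

theorem LipschitzWith.comp_absolutelyContinuousOnInterval {X Y : Type*} [PseudoMetricSpace X]
    [PseudoMetricSpace Y] {g : X → Y} {K : NNReal} (hg : LipschitzWith K g) {f : ℝ → X}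
    {a b : ℝ} (hf : AbsolutelyContinuousOnInterval f a b) :
    AbsolutelyContinuousOnInterval (g ∘ f) a b := by
  unfold AbsolutelyContinuousOnInterval at hf ⊢
  refine squeeze_zero (fun _ => Finset.sum_nonneg fun _ _ => dist_nonneg) (fun E => ?_)
    (by simpa using hf.const_mul (K : ℝ))
  rw [Finset.mul_sum]
  exact Finset.sum_le_sum fun i _ => hg.dist_le_mul _ _

theorem AbsolutelyContinuousOnInterval.antitoneOn_of_ae_hasDerivAt_nonpos {f : ℝ → ℝ} {a b : ℝ}
    (hf : AbsolutelyContinuousOnInterval f a b)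
    (hf' : ∀ᵐ t ∂volume.restrict (Ioo a b), ∀ d, HasDerivAt f d t → d ≤ 0) :
    AntitoneOn f (Icc a b) := by
  intro u hu v hv huv
  have hfuv : AbsolutelyContinuousOnInterval f u v :=
    hf.mono (uIcc_subset_uIcc (Icc_subset_uIcc hu) (Icc_subset_uIcc hv))
  have hderiv : ∀ᵐ t ∂volume.restrict (Ioc u v), deriv f t ≤ 0 := by
    rw [Measure.restrict_congr_set Ioo_ae_eq_Ioc] at hf'
    filter_upwards [ae_restrict_of_ae_restrict_of_subset (Ioc_subset_Ioc hu.1 hv.2) hf',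
      ae_restrict_mem measurableSet_Ioc, ae_restrict_of_ae hfuv.ae_differentiableAt]
      with t hneg ht hdiff
    exact hneg _ (hdiff (by simpa [uIcc_of_le huv] using Ioc_subset_Icc_self ht)).hasDerivAt
  have hftc := hfuv.integral_deriv_eq_sub
  rw [intervalIntegral.integral_of_le huv] at hftc
  linarith [integral_nonpos_of_ae hderiv]

theorem HasDerivAt.tendsto_infDist_sub_infDist_div {E : Type*} [NormedAddCommGroup E]
    [NormedSpace ℝ E] {x : ℝ → E} {v : E} {t : ℝ} (hx : HasDerivAt x v t) (K : Set E) :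
    Tendsto (fun h => (infDist (x (t + h)) K - infDist (x t + h • v) K) / h) (𝓝 0) (𝓝 0) := by
  refine (Asymptotics.IsBigO.trans_isLittleO ?_
    (hasDerivAt_iff_isLittleO_nhds_zero.1 hx)).tendsto_div_nhds_zero
  refine Asymptotics.IsBigO.of_bound 1 (Eventually.of_forall fun h => ?_)
  rw [one_mul, sub_sub, ← dist_eq_norm, ← dist_eq_norm]
  simpa using (lipschitz_infDist_pt K).dist_le_mul (x (t + h)) (x t + h • v)

theorem HasDerivAt.nonpos_of_mem_externalCone {n : ℕ} {K : Set (EuclideanSpace ℝ (Fin n))}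
    {x : ℝ → EuclideanSpace ℝ (Fin n)} {v : EuclideanSpace ℝ (Fin n)} {t d : ℝ}
    (hx : HasDerivAt x v t) (hv : v ∈ externalCone K (x t))
    (hf : HasDerivAt (fun s => infDist (x s) K) d t) : d ≤ 0 := by
  have hslope := (hasDerivAt_iff_tendsto_slope_zero.1 hf).mono_left
    (nhdsWithin_mono _ fun h (hh : 0 < h) => hh.ne')
  have herr := (hx.tendsto_infDist_sub_infDist_div K).mono_left
    (nhdsWithin_le_nhds (s := Ioi 0))
  have hquot : Tendsto (fun h => (infDist (x t + h • v) K - infDist (x t) K) / h)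
      (𝓝[>] 0) (𝓝 d) := by
    refine (sub_zero d ▸ hslope.sub herr).congr fun h => ?_
    simp only [smul_eq_mul, div_eq_inv_mul]
    ring
  exact hquot.liminf_eq ▸ hv

theorem stmt_14_general {n : ℕ} (K : Set (EuclideanSpace ℝ (Fin n)))
    (t₁ t₂ : ℝ) (hlt : t₁ ≤ t₂)
    (x : ℝ → EuclideanSpace ℝ (Fin n))
    (x' : ℝ → EuclideanSpace ℝ (Fin n))
    (hAC : AbsolutelyContinuousOnInterval' x t₁ t₂)
    (hderiv : ∀ᵐ t ∂(volume.restrict (Set.Ioo t₁ t₂)),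
      HasDerivAt x (x' t) t ∧ x' t ∈ externalCone K (x t)) :
    AntitoneOn (fun t => Metric.infDist (x t) K) (Set.Icc t₁ t₂) := by
  refine ((lipschitz_infDist_pt K).comp_absolutelyContinuousOnInterval
    (hAC.absolutelyContinuousOnInterval hlt)).antitoneOn_of_ae_hasDerivAt_nonpos ?_
  filter_upwards [hderiv] with t ⟨hx, hv⟩ d hd
  exact hx.nonpos_of_mem_externalCone hv hd

theorem stmt_14 {n : ℕ} (K : Set (EuclideanSpace ℝ (Fin n))) (hK : IsClosed K)
    (t₁ t₂ : ℝ) (hlt : t₁ ≤ t₂)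
    (x : ℝ → EuclideanSpace ℝ (Fin n))
    (x' : ℝ → EuclideanSpace ℝ (Fin n))
    (hAC : AbsolutelyContinuousOnInterval' x t₁ t₂)
    (hderiv : ∀ᵐ t ∂(volume.restrict (Set.Ioo t₁ t₂)),
      HasDerivAt x (x' t) t ∧ x' t ∈ externalCone K (x t)) :
    AntitoneOn (fun t => Metric.infDist (x t) K) (Set.Icc t₁ t₂) :=
  stmt_14_general K t₁ t₂ hlt x x' hAC hderiv
end
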